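/- Let λ₁ > 0, λ₂ > 0, α > 0 and θ ∈ [-1, 1]. Then ∫₀^∞ λ₁ e^{-λ₁x₁} (∫₀^{αx₁} (1 + θ(1 - 2e^{-λ₁x₁})(1 - 2e^{-λ₂x₂})) λ₂ e^{-λ₂x₂} dx₂) dx₁ = λ₂α/(λ₁+λ₂α) + θλ₁·(2/(2λ₁+λ₂α) + 1/(λ₁+2λ₂α) - 2/(λ₁+λ₂α)). -/

import Mathlib

/-! Since `(1 - 2e^{-bx}) b e^{-bx}` is the derivative of `e^{-2bx} - e^{-bx}`, the inner integral
has a closed form; the outer integrand is then a combination of five exponentials `e^{-cx}`, whose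
integrals over `(0, ∞)` are `1 / c`. -/

open MeasureTheory Real

theorem integral_Ioi_sum_mul_exp_neg_mul {ι : Type*} (s : Finset ι) (a c : ι → ℝ)
    (hc : ∀ i ∈ s, 0 < c i) :
    ∫ x in Set.Ioi (0 : ℝ), ∑ i ∈ s, a i * exp (-c i * x) = ∑ i ∈ s, a i / c i := by
  have hneg : ∀ i ∈ s, -c i < 0 := fun i hi => neg_lt_zero.2 (hc i hi)
  rw [integral_finsetSum s fun i hi => (integrableOn_exp_mul_Ioi (hneg i hi) 0).const_mul (a i)]
  refine Finset.sum_congr rfl fun i hi => ?_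
  rw [integral_const_mul, integral_exp_mul_Ioi (hneg i hi)]
  simp [div_eq_mul_inv]

theorem intervalIntegral_fgm_exp_density (a b T : ℝ) :
    ∫ x in (0 : ℝ)..T, (1 + a * (1 - 2 * exp (-b * x))) * (b * exp (-b * x))
      = 1 - exp (-b * T) + a * (exp (-b * T) ^ 2 - exp (-b * T)) := by
  have hderiv : ∀ x ∈ Set.uIcc (0 : ℝ) T,
      HasDerivAt (fun x => -(1 + a) * exp (-b * x) + a * exp (-b * x) ^ 2)
        ((1 + a * (1 - 2 * exp (-b * x))) * (b * exp (-b * x))) x := by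
    intro x _
    have hexp : HasDerivAt (fun x => exp (-b * x)) (exp (-b * x) * (-b * 1)) x :=
      ((hasDerivAt_id x).const_mul (-b)).exp
    refine ((hexp.const_mul (-(1 + a))).add ((hexp.pow 2).const_mul a)).congr_deriv ?_
    norm_num
    ring
  rw [intervalIntegral.integral_eq_sub_of_hasDerivAt hderiv
    ((by fun_prop : Continuous fun x =>
      (1 + a * (1 - 2 * exp (-b * x))) * (b * exp (-b * x))).intervalIntegrable 0 T)]
  simp only [mul_zero, exp_zero]
  ring

theorem fgm_outer_integrand_eq_sum_exp (l₁ l₂ α θ x : ℝ) :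
    l₁ * exp (-l₁ * x) * (1 - exp (-l₂ * (α * x))
        + θ * (1 - 2 * exp (-l₁ * x)) * (exp (-l₂ * (α * x)) ^ 2 - exp (-l₂ * (α * x))))
      = ∑ i : Fin 5, ![l₁, -(1 + θ) * l₁, θ * l₁, -(2 * θ * l₁), 2 * θ * l₁] i
          * exp (-![l₁, l₁ + l₂ * α, l₁ + 2 * l₂ * α, 2 * l₁ + 2 * l₂ * α, 2 * l₁ + l₂ * α] i
            * x) := by
  set e₁ := exp (-l₁ * x)
  set e₂ := exp (-l₂ * (α * x))
  have h₁₁ : exp (-(l₁ + l₂ * α) * x) = e₁ * e₂ := by rw [← exp_add]; congr 1; ring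
  have h₁₂ : exp (-(l₁ + 2 * l₂ * α) * x) = e₁ * e₂ ^ 2 := by
    rw [sq, ← exp_add, ← exp_add]; congr 1; ring
  have h₂₂ : exp (-(2 * l₁ + 2 * l₂ * α) * x) = e₁ ^ 2 * e₂ ^ 2 := by
    rw [sq, sq, ← exp_add, ← exp_add, ← exp_add]; congr 1; ring
  have h₂₁ : exp (-(2 * l₁ + l₂ * α) * x) = e₁ ^ 2 * e₂ := by
    rw [sq, ← exp_add, ← exp_add]; congr 1; ring
  simp only [Fin.sum_univ_five, Matrix.cons_val, h₁₁, h₁₂, h₂₂, h₂₁]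
  ring

theorem gwed_prob_alpha_X1_gt_X2
    (l₁ l₂ α θ : ℝ) (hl₁ : 0 < l₁) (hl₂ : 0 < l₂) (hα : 0 < α) :
    (∫ x₁ in Set.Ioi (0 : ℝ),
        l₁ * Real.exp (-l₁ * x₁) *
          (∫ x₂ in (0 : ℝ)..(α * x₁),
            (1 + θ * (1 - 2 * Real.exp (-l₁ * x₁)) * (1 - 2 * Real.exp (-l₂ * x₂)))
              * (l₂ * Real.exp (-l₂ * x₂))))
      = l₂ * α / (l₁ + l₂ * α)
        + θ * l₁ * (2 / (2 * l₁ + l₂ * α) + 1 / (l₁ + 2 * l₂ * α)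
          - 2 / (l₁ + l₂ * α)) := by
  simp_rw [intervalIntegral_fgm_exp_density, fgm_outer_integrand_eq_sum_exp]
  rw [integral_Ioi_sum_mul_exp_neg_mul]
  · simp only [Fin.sum_univ_five, Matrix.cons_val]
    field_simp
    ring
  · intro i _
    fin_cases i <;> simp <;> positivity
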